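/- Let (A, E, μ) be a weighted tournament graph, let c be a candidate and let S be the strongly connected component of c in the digraph (A, E). If there is an edge (v, c) ∈ E with v ∉ S, then v beats every candidate u ∈ S; in particular, no candidate of S is a Schulze winner. -/

import Mathlib

variable {V : Type*}

/-- Width of a path given as a list of vertices: the minimum weight of its edges. -/
def pathWidth (μ : V → V → ℝ) : List V → ℝ
  | [x, y] => μ x y
  | x :: y :: z :: rest => min (μ x y) (pathWidth μ (y :: z :: rest))
  | _ => 0

/-- `xs` is a path from `a` to `b` in the digraph with edge relation `E`. -/
def IsPath (E : V → V → Prop) (a b : V) (xs : List V) : Prop :=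
  xs.Chain' E ∧ xs.head? = some a ∧ xs.getLast? = some b

/-- `p(a,b)`: the maximum width of a path from `a` to `b` (`0` if there is none). -/
noncomputable def widestPath (E : V → V → Prop) (μ : V → V → ℝ) (a b : V) : ℝ :=
  sSup {w : ℝ | ∃ xs : List V, IsPath E a b xs ∧ pathWidth μ xs = w}

/-- `a` beats `b` according to the Schulze method: `p(a,b) > p(b,a)`. -/
def Beats (E : V → V → Prop) (μ : V → V → ℝ) (a b : V) : Prop :=
  widestPath E μ b a < widestPath E μ a b

/-- `c` is a Schulze winner: no candidate beats `c`. -/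
def SchulzeWinner (E : V → V → Prop) (μ : V → V → ℝ) (c : V) : Prop :=
  ∀ b : V, ¬ Beats E μ b c


/-- The strongly connected component of `c`: all vertices mutually reachable with `c`. -/
def scc (E : V → V → Prop) (c : V) : Set V :=
  {v : V | Relation.ReflTransGen E c v ∧ Relation.ReflTransGen E v c}

lemma pathWidth_pos {μ : V → V → ℝ} {E : V → V → Prop}
    (hpos : ∀ x y, E x y → 0 < μ x y) :
    ∀ xs : List V, xs.Chain' E → 2 ≤ xs.length → 0 < pathWidth μ xs
  | [x, y], h, _ => by
      simp only [List.Chain', List.isChain_cons_cons, List.isChain_singleton, and_true] at h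
      simpa [pathWidth] using hpos _ _ h
  | x :: y :: z :: rest, h, _ => by
      rw [List.Chain', List.isChain_cons_cons] at h
      have := pathWidth_pos hpos (y :: z :: rest) h.2 (by simp)
      exact lt_min (hpos _ _ h.1) this

lemma pathWidth_le {μ : V → V → ℝ} {M : ℝ} (hM : ∀ x y, μ x y ≤ M) :
    ∀ xs : List V, pathWidth μ xs ≤ max 0 M
  | [] => by simp [pathWidth]
  | [x] => by simp [pathWidth]
  | [x, y] => le_max_of_le_right (hM x y)
  | x :: y :: z :: rest =>
      le_max_of_le_right (le_trans (min_le_left _ _) (hM x y))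

lemma isPath_reach {E : V → V → Prop} {a b : V} {xs : List V}
    (h : IsPath E a b xs) : Relation.ReflTransGen E a b := by
  obtain ⟨hch, hhd, hlast⟩ := h
  match xs, hhd with
  | x :: t, hhd =>
    simp only [List.head?_cons, Option.some.injEq] at hhd
    subst hhd
    have hch' : List.Chain E x t := hch
    have hne : (x :: t) ≠ [] := by simp
    rw [List.getLast?_eq_getLast hne, Option.some.injEq] at hlast
    exact List.relationReflTransGen_of_exists_isChain_cons t hch' hlast

theorem stmt_11 {A : Type*} [Fintype A] (E : A → A → Prop) (μ : A → A → ℝ)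
    (hirr : ∀ x, ¬ E x x)
    (hpos : ∀ x y, E x y → 0 < μ x y)
    (c v : A) (hvc : E v c) (hv : v ∉ scc E c) :
    (∀ u ∈ scc E c, Beats E μ v u) ∧
    (∀ u ∈ scc E c, ¬ SchulzeWinner E μ u) := by
  have key : ∀ u ∈ scc E c, Beats E μ v u := by
    intro u hu
    -- p(u,v) = 0 : the set of paths from u to v is empty
    have hempty : {w : ℝ | ∃ xs : List A, IsPath E u v xs ∧ pathWidth μ xs = w} = ∅ := by
      ext w
      simp only [Set.mem_setOf_eq, Set.mem_empty_iff_false, iff_false, not_exists]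
      rintro xs ⟨hp, -⟩
      have huv := isPath_reach hp
      exact hv ⟨hu.1.trans huv, Relation.ReflTransGen.single hvc⟩
    have hz : widestPath E μ u v = 0 := by
      rw [widestPath, hempty, Real.sSup_empty]
    -- p(v,u) > 0
    obtain ⟨l, hchain, hlast⟩ := List.exists_isChain_cons_of_relationReflTransGen hu.1
    set xs : List A := v :: c :: l with hxs
    have hpath : IsPath E v u xs := by
      refine ⟨?_, by simp [hxs], ?_⟩
      · show List.Chain E v (c :: l)
        exact List.Chain.cons hvc hchain
      · rw [List.getLast?_eq_getLast (by simp)]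
        simp only [Option.some.injEq]
        rw [List.getLast_cons (by simp)]
        exact hlast
    have hwpos : 0 < pathWidth μ xs :=
      pathWidth_pos hpos xs hpath.1 (by simp [hxs])
    obtain ⟨M, hM⟩ := Finite.exists_le (fun p : A × A => μ p.1 p.2)
    have hM' : ∀ x y : A, μ x y ≤ M := fun x y => hM (x, y)
    have hbdd : BddAbove {w : ℝ | ∃ xs : List A, IsPath E v u xs ∧ pathWidth μ xs = w} := by
      refine ⟨max 0 M, ?_⟩
      rintro w ⟨ys, -, rfl⟩
      exact pathWidth_le hM' ys
    have hmem : pathWidth μ xs ∈ {w : ℝ | ∃ xs : List A, IsPath E v u xs ∧ pathWidth μ xs = w} :=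
      ⟨xs, hpath, rfl⟩
    have hle : pathWidth μ xs ≤ widestPath E μ v u := le_csSup hbdd hmem
    rw [Beats, hz]
    exact lt_of_lt_of_le hwpos hle
  exact ⟨key, fun u hu hw => hw v (key u hu)⟩
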